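/- Let α ∈ (2,4), let u_h → u strongly in L²(Ω; ℝ^d) with u_h, u bounded in L^α(Ω; ℝ^d), let K⁻¹ ∈ L^{α/(α−2)}(Ω), and let v_h → v strongly in L^{2α/(4−α)}(Ω; ℝ^d). Then ∫_Ω (A(u_h) − A(u)) · v_h dx → 0 as h → 0, where A(w) = (μ/ρ)K⁻¹w + (β/ρ)|w|^{α−2}w. -/

import Mathlib

/-!
The map `A` is Lipschitz with a position-dependent constant,
`|A v − A w| ≤ (|μ/ρ| |K⁻¹| + 3 |β/ρ| (|v|^{α−2} + |w|^{α−2})) |v − w|`.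
As `(α−2)/α + 1/2 + (4−α)/(2α) = 1`, the three-factor Hölder inequality bounds the integral by the
`L^{α/(α−2)}` norm of that constant, which stays bounded because `u_h` is bounded in `L^α`, times
`‖u_h − u‖_{L²} → 0`, times `‖v_h‖_{L^{2α/(4−α)}}`, which stays bounded because `v_h` converges.
-/

open MeasureTheory ENNReal Real Filter Topology
open scoped RealInnerProductSpace NNReal

lemma one_sub_rpow_mul_le {s t : ℝ} (hs₀ : 0 ≤ s) (hs₁ : s ≤ 1) (ht : 0 < t) (ht₂ : t ≤ 2) :
    (1 - s ^ t) * s ≤ 2 * (1 - s) := by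
  have hsq : s ^ (2 : ℝ) ≤ s ^ t := Real.rpow_le_rpow_of_exponent_ge' hs₀ hs₁ ht.le ht₂
  rw [Real.rpow_two] at hsq
  nlinarith [mul_le_mul_of_nonneg_right hsq hs₀, mul_nonneg (sub_nonneg.2 hs₁) hs₀]

lemma rpow_sub_rpow_mul_le {x y t : ℝ} (hy : 0 ≤ y) (hyx : y ≤ x) (ht : 0 < t) (ht₂ : t ≤ 2) :
    (x ^ t - y ^ t) * y ≤ 2 * x ^ t * (x - y) := by
  obtain rfl | hx := (hy.trans hyx).eq_or_lt
  · simp [le_antisymm hyx hy, Real.zero_rpow ht.ne']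
  obtain ⟨s, hs₀, hs₁, rfl⟩ : ∃ s, 0 ≤ s ∧ s ≤ 1 ∧ y = s * x :=
    ⟨y / x, div_nonneg hy hx.le, div_le_one_of_le₀ hyx hx.le, (div_mul_cancel₀ y hx.ne').symm⟩
  have key := one_sub_rpow_mul_le hs₀ hs₁ ht ht₂
  have hxt : 0 ≤ x ^ t * x := mul_nonneg (Real.rpow_nonneg hx.le t) hx.le
  calc (x ^ t - (s * x) ^ t) * (s * x) = x ^ t * x * ((1 - s ^ t) * s) := by
        rw [Real.mul_rpow hs₀ hx.le]; ring
    _ ≤ x ^ t * x * (2 * (1 - s)) := mul_le_mul_of_nonneg_left key hxt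
    _ = 2 * x ^ t * (x - s * x) := by ring

section Forchheimer

variable {E : Type*} [NormedAddCommGroup E] [NormedSpace ℝ E] {t : ℝ}

lemma norm_rpow_smul_sub_rpow_smul_le_of_norm_le (ht : 0 < t) (ht₂ : t ≤ 2) {v w : E}
    (hwv : ‖w‖ ≤ ‖v‖) :
    ‖‖v‖ ^ t • v - ‖w‖ ^ t • w‖ ≤ 3 * (‖v‖ ^ t + ‖w‖ ^ t) * ‖v - w‖ := by
  have hvt : 0 ≤ ‖v‖ ^ t := Real.rpow_nonneg (norm_nonneg v) t
  have hwt : 0 ≤ ‖w‖ ^ t := Real.rpow_nonneg (norm_nonneg w) t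
  have hwvt : ‖w‖ ^ t ≤ ‖v‖ ^ t := Real.rpow_le_rpow (norm_nonneg w) hwv ht.le
  have key := rpow_sub_rpow_mul_le (norm_nonneg w) hwv ht ht₂
  have hdiff := norm_sub_norm_le v w
  calc ‖‖v‖ ^ t • v - ‖w‖ ^ t • w‖
      = ‖‖v‖ ^ t • (v - w) + (‖v‖ ^ t - ‖w‖ ^ t) • w‖ := by
        rw [smul_sub, sub_smul, sub_add_sub_cancel]
    _ ≤ ‖v‖ ^ t * ‖v - w‖ + (‖v‖ ^ t - ‖w‖ ^ t) * ‖w‖ := by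
        refine (norm_add_le _ _).trans_eq ?_
        rw [norm_smul, norm_smul, Real.norm_of_nonneg hvt, Real.norm_of_nonneg (by linarith)]
    _ ≤ 3 * (‖v‖ ^ t + ‖w‖ ^ t) * ‖v - w‖ := by
        nlinarith [mul_le_mul_of_nonneg_left hdiff hvt, mul_nonneg hwt (norm_nonneg (v - w))]

lemma norm_rpow_smul_sub_rpow_smul_le (ht : 0 < t) (ht₂ : t ≤ 2) (v w : E) :
    ‖‖v‖ ^ t • v - ‖w‖ ^ t • w‖ ≤ 3 * (‖v‖ ^ t + ‖w‖ ^ t) * ‖v - w‖ := by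
  rcases le_total ‖w‖ ‖v‖ with h | h
  · exact norm_rpow_smul_sub_rpow_smul_le_of_norm_le ht ht₂ h
  · simpa only [norm_sub_rev, add_comm] using norm_rpow_smul_sub_rpow_smul_le_of_norm_le ht ht₂ h

/-- The paper's `A`, with `a = μ/ρ`, `b = β/ρ`, `t = α - 2`, and `K` standing for `K⁻¹(x)`. -/
noncomputable def forchheimerMap (a b t : ℝ) (K : E →L[ℝ] E) (w : E) : E :=
  a • K w + b • ‖w‖ ^ t • w

lemma norm_forchheimerMap_sub_le (a b : ℝ) (K : E →L[ℝ] E) (ht : 0 < t) (ht₂ : t ≤ 2) (v w : E) :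
    ‖forchheimerMap a b t K v - forchheimerMap a b t K w‖ ≤
      (‖a‖ * ‖K‖ + 3 * ‖b‖ * (‖v‖ ^ t + ‖w‖ ^ t)) * ‖v - w‖ := by
  have hK : ‖K v - K w‖ ≤ ‖K‖ * ‖v - w‖ := by rw [← map_sub]; exact K.le_opNorm _
  have hN := norm_rpow_smul_sub_rpow_smul_le ht ht₂ v w
  calc ‖forchheimerMap a b t K v - forchheimerMap a b t K w‖
      = ‖a • (K v - K w) + b • (‖v‖ ^ t • v - ‖w‖ ^ t • w)‖ := by
        unfold forchheimerMap; rw [smul_sub, smul_sub, add_sub_add_comm]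
    _ ≤ ‖a‖ * ‖K v - K w‖ + ‖b‖ * ‖‖v‖ ^ t • v - ‖w‖ ^ t • w‖ :=
        (norm_add_le _ _).trans_eq (by rw [norm_smul, norm_smul])
    _ ≤ ‖a‖ * (‖K‖ * ‖v - w‖) + ‖b‖ * (3 * (‖v‖ ^ t + ‖w‖ ^ t) * ‖v - w‖) := by gcongr
    _ = (‖a‖ * ‖K‖ + 3 * ‖b‖ * (‖v‖ ^ t + ‖w‖ ^ t)) * ‖v - w‖ := by ring

end Forchheimer

lemma tendsto_const_mul_mul_add_const_of_tendsto_zero {ι : Type*} {l : Filter ι}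
    {a b : ι → ℝ≥0∞} {C L : ℝ≥0∞} (hC : C ≠ ⊤) (hL : L ≠ ⊤) (ha : Tendsto a l (𝓝 0))
    (hb : Tendsto b l (𝓝 0)) : Tendsto (fun i => C * a i * (b i + L)) l (𝓝 0) := by
  have hCa := ENNReal.Tendsto.const_mul ha (Or.inr hC)
  have hbL := hb.add (tendsto_const_nhds (x := L))
  simpa using ENNReal.Tendsto.mul hCa (Or.inr (by simpa using hL)) hbL (Or.inr (by simp))

section Lebesgue

variable {X E F G : Type*} [MeasurableSpace X] {μ : Measure X}
  [NormedAddCommGroup E] [NormedAddCommGroup F] [NormedAddCommGroup G] [NormedSpace ℝ G]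

lemma holderTriple_ofReal_of_two_lt_of_lt_four {α : ℝ} (h₂ : 2 < α) (h₄ : α < 4) :
    HolderTriple (ENNReal.ofReal (α / (α - 2))) 2 (ENNReal.ofReal (2 * α / (3 * α - 4))) ∧
      HolderTriple (ENNReal.ofReal (2 * α / (3 * α - 4))) (ENNReal.ofReal (2 * α / (4 - α))) 1 := by
  have hα₂ : 0 < α - 2 := by linarith
  have hα₃ : 0 < 3 * α - 4 := by linarith
  have hα₄ : 0 < 4 - α := by linarith
  have h₁ : Real.HolderTriple (α / (α - 2)) 2 (2 * α / (3 * α - 4)) :=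
    ⟨by field_simp; ring, by positivity, two_pos⟩
  have h₂ : Real.HolderConjugate (2 * α / (3 * α - 4)) (2 * α / (4 - α)) :=
    ⟨by field_simp; ring, by positivity, by positivity⟩
  simpa using And.intro h₁.ennrealOfReal h₂.ennrealOfReal

theorem enorm_integral_le_eLpNorm_mul_eLpNorm_mul_eLpNorm {p q r s : ℝ≥0∞}
    [HolderTriple p q s] [HolderTriple s r 1] {Φ : X → G} {g : X → ℝ} {f : X → E} {h : X → F}
    (hg : AEStronglyMeasurable g μ) (hf : AEStronglyMeasurable f μ)
    (hh : AEStronglyMeasurable h μ) (hΦ : ∀ᵐ x ∂μ, ‖Φ x‖ ≤ g x * ‖f x‖ * ‖h x‖) :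
    ‖∫ x, Φ x ∂μ‖ₑ ≤ eLpNorm g p μ * eLpNorm f q μ * eLpNorm h r μ := by
  calc ‖∫ x, Φ x ∂μ‖ₑ ≤ ∫⁻ x, ‖Φ x‖ₑ ∂μ := enorm_integral_le_lintegral_enorm _
    _ ≤ ∫⁻ x, ‖g x * ‖f x‖ * ‖h x‖‖ₑ ∂μ :=
        lintegral_mono_ae <| hΦ.mono fun x hx => enorm_le_iff_norm_le.2 <|
          hx.trans (Real.le_norm_self _)
    _ = eLpNorm (fun x => g x * ‖f x‖ * ‖h x‖) 1 μ := eLpNorm_one_eq_lintegral_enorm.symm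
    _ ≤ eLpNorm (fun x => g x * ‖f x‖) s μ * eLpNorm h r μ := by
        have hgf : AEStronglyMeasurable (fun x => g x * ‖f x‖) μ := hg.mul hf.norm
        simpa only [ENNReal.coe_one, one_mul] using eLpNorm_le_eLpNorm_mul_eLpNorm'_of_norm hgf hh
          (fun a b => a * ‖b‖) 1 (ae_of_all _ fun x => by simp [norm_mul])
    _ ≤ eLpNorm g p μ * eLpNorm f q μ * eLpNorm h r μ := by
        gcongr
        simpa only [ENNReal.coe_one, one_mul] using eLpNorm_le_eLpNorm_mul_eLpNorm'_of_norm hg hf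
          (fun a b => a * ‖b‖) 1 (ae_of_all _ fun x => by simp [norm_mul])

lemma eLpNorm_le_eLpNorm_sub_add {p : ℝ≥0∞} {f g : X → E} (hp : 1 ≤ p)
    (hf : AEStronglyMeasurable f μ) (hg : AEStronglyMeasurable g μ) :
    eLpNorm f p μ ≤ eLpNorm (f - g) p μ + eLpNorm g p μ := by
  simpa using eLpNorm_add_le (hf.sub hg) hg hp

lemma eLpNorm_add_mul_rpow_add_rpow_le {p r : ℝ≥0∞} {t c₁ c₂ : ℝ} {k : X → ℝ} {v w : X → E}
    (hp : 1 ≤ p) (ht : 0 < t) (hpr : p * ENNReal.ofReal t = r) (hk : AEStronglyMeasurable k μ)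
    (hv : AEStronglyMeasurable v μ) (hw : AEStronglyMeasurable w μ) :
    eLpNorm (fun x => c₁ * k x + c₂ * (‖v x‖ ^ t + ‖w x‖ ^ t)) p μ ≤
      ‖c₁‖ₑ * eLpNorm k p μ + ‖c₂‖ₑ * (eLpNorm v r μ ^ t + eLpNorm w r μ ^ t) := by
  have hpow : Continuous fun s : ℝ => s ^ t := Real.continuous_rpow_const ht.le
  have hvt := hpow.comp_aestronglyMeasurable hv.norm
  have hwt := hpow.comp_aestronglyMeasurable hw.norm
  calc eLpNorm (fun x => c₁ * k x + c₂ * (‖v x‖ ^ t + ‖w x‖ ^ t)) p μ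
      ≤ eLpNorm (c₁ • k) p μ + eLpNorm (c₂ • fun x => ‖v x‖ ^ t + ‖w x‖ ^ t) p μ :=
        eLpNorm_add_le (hk.const_smul c₁) ((hvt.add hwt).const_smul c₂) hp
    _ ≤ ‖c₁‖ₑ * eLpNorm k p μ +
          ‖c₂‖ₑ * (eLpNorm (fun x => ‖v x‖ ^ t) p μ + eLpNorm (fun x => ‖w x‖ ^ t) p μ) := by
        rw [eLpNorm_const_smul, eLpNorm_const_smul]
        gcongr
        exact eLpNorm_add_le hvt hwt hp
    _ = ‖c₁‖ₑ * eLpNorm k p μ + ‖c₂‖ₑ * (eLpNorm v r μ ^ t + eLpNorm w r μ ^ t) := by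
        rw [eLpNorm_norm_rpow v ht, eLpNorm_norm_rpow w ht, hpr]

end Lebesgue

theorem convergence_nonlinear_term_general
    {d : ℕ} {X : Type*} [MeasurableSpace X] (vol : Measure X)
    (α μ ρ β : ℝ) (hα1 : 2 < α) (hα2 : α < 4)
    (Kinv : X → EuclideanSpace ℝ (Fin d) →L[ℝ] EuclideanSpace ℝ (Fin d))
    (hK : MemLp (fun x => ‖Kinv x‖) (ENNReal.ofReal (α / (α - 2))) vol)
    (u : ℕ → X → EuclideanSpace ℝ (Fin d)) (ul : X → EuclideanSpace ℝ (Fin d))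
    (v : ℕ → X → EuclideanSpace ℝ (Fin d)) (vl : X → EuclideanSpace ℝ (Fin d))
    (hum : ∀ n, MemLp (u n) (ENNReal.ofReal α) vol)
    (hulm : MemLp ul (ENNReal.ofReal α) vol)
    (hvm : ∀ n, MemLp (v n) (ENNReal.ofReal (2 * α / (4 - α))) vol)
    (hvlm : MemLp vl (ENNReal.ofReal (2 * α / (4 - α))) vol)
    (huL2 : Tendsto (fun n => eLpNorm (fun x => u n x - ul x) 2 vol) atTop (nhds 0))
    (hbound : ∃ B : ℝ≥0∞, B ≠ ⊤ ∧ (∀ n, eLpNorm (u n) (ENNReal.ofReal α) vol ≤ B) ∧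
      eLpNorm ul (ENNReal.ofReal α) vol ≤ B)
    (hvconv : Tendsto (fun n => eLpNorm (fun x => v n x - vl x)
        (ENNReal.ofReal (2 * α / (4 - α))) vol) atTop (nhds 0)) :
    Tendsto (fun n => ∫ x,
        ⟪((μ / ρ) • Kinv x (u n x) + (β / ρ) • ‖u n x‖ ^ (α - 2) • u n x) -
          ((μ / ρ) • Kinv x (ul x) + (β / ρ) • ‖ul x‖ ^ (α - 2) • ul x),
          v n x⟫ ∂vol) atTop (nhds 0) := by
  obtain ⟨B, hB, hBu, hBl⟩ := hbound
  obtain ⟨hP2S, hSQ1⟩ := holderTriple_ofReal_of_two_lt_of_lt_four hα1 hα2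
  set P := ENNReal.ofReal (α / (α - 2))
  set Q := ENNReal.ofReal (2 * α / (4 - α))
  set S := ENNReal.ofReal (2 * α / (3 * α - 4))
  have ht : 0 < α - 2 := by linarith
  have hP : 1 ≤ P := ENNReal.one_le_ofReal.2 <| (one_le_div ht).2 (by linarith)
  have hQ : 1 ≤ Q := ENNReal.one_le_ofReal.2 <| (one_le_div (by linarith)).2 (by linarith)
  have hPt : P * ENNReal.ofReal (α - 2) = ENNReal.ofReal α := by
    rw [← ENNReal.ofReal_mul (by positivity), div_mul_cancel₀ _ ht.ne']
  set A := fun x => forchheimerMap (μ / ρ) (β / ρ) (α - 2) (Kinv x)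
  set g := fun n x => ‖μ / ρ‖ * ‖Kinv x‖ + 3 * ‖β / ρ‖ * (‖u n x‖ ^ (α - 2) + ‖ul x‖ ^ (α - 2))
  obtain ⟨C, hC, hgC⟩ : ∃ C ≠ ⊤, ∀ n, eLpNorm (g n) P vol ≤ C := by
    refine ⟨‖‖μ / ρ‖‖ₑ * eLpNorm (fun x => ‖Kinv x‖) P vol +
      ‖3 * ‖β / ρ‖‖ₑ * (B ^ (α - 2) + B ^ (α - 2)), by finiteness [hK.2.ne], fun n => ?_⟩
    refine (eLpNorm_add_mul_rpow_add_rpow_le hP ht hPt hK.1 (hum n).1 hulm.1).trans ?_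
    gcongr
    exact hBu n
  have hest n : ‖∫ x, ⟪A x (u n x) - A x (ul x), v n x⟫ ∂vol‖ₑ ≤
      C * eLpNorm (fun x => u n x - ul x) 2 vol *
        (eLpNorm (fun x => v n x - vl x) Q vol + eLpNorm vl Q vol) := by
    refine (enorm_integral_le_eLpNorm_mul_eLpNorm_mul_eLpNorm (s := S) (g := g n)
      (f := fun x => u n x - ul x) ?_ ((hum n).1.sub hulm.1) (hvm n).1
      (ae_of_all _ fun x => ?_)).trans <| by
        gcongr
        exacts [hgC n, eLpNorm_le_eLpNorm_sub_add hQ (hvm n).1 hvlm.1]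
    · have hKm := hK.1
      have hum' := (hum n).1
      have hulm' := hulm.1
      fun_prop (disch := exact ht.le)
    · exact (norm_inner_le_norm _ _).trans <| mul_le_mul_of_nonneg_right
        (norm_forchheimerMap_sub_le _ _ _ ht (by linarith) _ _) (norm_nonneg _)
  change Tendsto (fun n => ∫ x, ⟪A x (u n x) - A x (ul x), v n x⟫ ∂vol) atTop (𝓝 0)
  exact tendsto_zero_iff_enorm_tendsto_zero.2 <|
    tendsto_of_tendsto_of_tendsto_of_le_of_le tendsto_const_nhds
      (tendsto_const_mul_mul_add_const_of_tendsto_zero hC hvlm.2.ne huL2 hvconv)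
      (fun _ => bot_le) hest

/-- For `α ∈ (2,4)`, if `u_h → u` strongly in `L²(Ω;ℝ^d)` with `u_h, u` bounded in
`L^α(Ω;ℝ^d)`, `K⁻¹ ∈ L^{α/(α−2)}(Ω)`, and `v_h → v` strongly in `L^{2α/(4−α)}(Ω;ℝ^d)`,
then `∫_Ω (A(u_h) − A(u)) · v_h dx → 0`, where `A(w) = (μ/ρ)K⁻¹w + (β/ρ)|w|^{α−2}w`. -/
theorem convergence_nonlinear_term
    {d : ℕ} {X : Type*} [MeasurableSpace X] (vol : Measure X)
    (α μ ρ β : ℝ) (hα1 : 2 < α) (hα2 : α < 4) (hμ : 0 < μ) (hρ : 0 < ρ) (hβ : 0 < β)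
    (Kinv : X → EuclideanSpace ℝ (Fin d) →L[ℝ] EuclideanSpace ℝ (Fin d))
    (hK : MemLp (fun x => ‖Kinv x‖) (ENNReal.ofReal (α / (α - 2))) vol)
    (u : ℕ → X → EuclideanSpace ℝ (Fin d)) (ul : X → EuclideanSpace ℝ (Fin d))
    (v : ℕ → X → EuclideanSpace ℝ (Fin d)) (vl : X → EuclideanSpace ℝ (Fin d))
    (hum : ∀ n, MemLp (u n) (ENNReal.ofReal α) vol)
    (hulm : MemLp ul (ENNReal.ofReal α) vol)
    (hvm : ∀ n, MemLp (v n) (ENNReal.ofReal (2 * α / (4 - α))) vol)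
    (hvlm : MemLp vl (ENNReal.ofReal (2 * α / (4 - α))) vol)
    (huL2 : Tendsto (fun n => eLpNorm (fun x => u n x - ul x) 2 vol) atTop (nhds 0))
    (hbound : ∃ B : ℝ≥0∞, B ≠ ⊤ ∧ (∀ n, eLpNorm (u n) (ENNReal.ofReal α) vol ≤ B) ∧
      eLpNorm ul (ENNReal.ofReal α) vol ≤ B)
    (hvconv : Tendsto (fun n => eLpNorm (fun x => v n x - vl x)
        (ENNReal.ofReal (2 * α / (4 - α))) vol) atTop (nhds 0)) :
    Tendsto (fun n => ∫ x,
        ⟪((μ / ρ) • Kinv x (u n x) + (β / ρ) • ‖u n x‖ ^ (α - 2) • u n x) -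
          ((μ / ρ) • Kinv x (ul x) + (β / ρ) • ‖ul x‖ ^ (α - 2) • ul x),
          v n x⟫ ∂vol) atTop (nhds 0) :=
  convergence_nonlinear_term_general vol α μ ρ β hα1 hα2 Kinv hK u ul v vl hum hulm hvm hvlm huL2
    hbound hvconv
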